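/- The sigmoid array [1/(1+x²), arctan(x)] is the coefficient array of an orthogonal polynomial family: let P : ℕ → Polynomial ℚ be defined by P₀ = 1, P₁ = X, and Pₙ = X·Pₙ₋₁ - n(n-1)·Pₙ₋₂ for n ≥ 2. Then for all natural numbers n and k, the coefficient of X^k in Pₙ equals (1/k!) · iteratedDeriv n (fun z => (1/(1+z²)) · (arctan z)^k) 0. -/

import Mathlib

open Polynomial

/-- The orthogonal polynomial family with `P₀ = 1`, `P₁ = X`, and
`Pₙ = X·Pₙ₋₁ - n(n-1)·Pₙ₋₂` for `n ≥ 2`. -/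
noncomputable def sigmoidPoly : ℕ → Polynomial ℚ
  | 0 => 1
  | 1 => Polynomial.X
  | (m + 2) =>
      Polynomial.X * sigmoidPoly (m + 1)
        - Polynomial.C (((m + 2) * (m + 1) : ℕ) : ℚ) * sigmoidPoly m

namespace SigmoidAux

noncomputable def F (k : ℕ) : ℝ → ℝ := fun z => (1 / (1 + z ^ 2)) * Real.arctan z ^ k

lemma one_add_sq_ne (z : ℝ) : (1 : ℝ) + z ^ 2 ≠ 0 := by positivity

lemma contDiff_F (k : ℕ) : ContDiff ℝ (⊤ : ℕ∞) (F k) := by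
  apply ContDiff.mul
  · exact contDiff_const.div (contDiff_const.add (contDiff_id.pow 2))
      (fun z => one_add_sq_ne z)
  · exact Real.contDiff_arctan.pow k

lemma hd {h : ℝ → ℝ} (hs : ContDiff ℝ (⊤ : ℕ∞) h) (j : ℕ) (x : ℝ) :
    HasDerivAt (iteratedDeriv j h) (iteratedDeriv (j + 1) h x) x := by
  have hdiff : DifferentiableAt ℝ (iteratedDeriv j h) x :=
    (hs.differentiable_iteratedDeriv j
      (by exact_mod_cast lt_top_iff_ne_top.2 (by simp))).differentiableAt
  have := hdiff.hasDerivAt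
  rwa [← iteratedDeriv_succ] at this

lemma iter_cmul {h : ℝ → ℝ} (hs : ContDiff ℝ (⊤ : ℕ∞) h) (c : ℝ) (m : ℕ) :
    iteratedDeriv m (fun z => c * h z) = fun z => c * iteratedDeriv m h z := by
  induction m with
  | zero => simp [iteratedDeriv_zero]
  | succ m ih =>
    funext x
    rw [iteratedDeriv_succ, ih]
    exact ((hd hs m x).const_mul c).deriv

lemma hasDerivAt_arctanPow (k : ℕ) (x : ℝ) :
    HasDerivAt (fun z : ℝ => Real.arctan z ^ k) ((k : ℝ) * F (k - 1) x) x := by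
  have := (Real.hasDerivAt_arctan x).pow k
  exact this.congr_deriv (by unfold F; ring)

lemma key {h : ℝ → ℝ} (hs : ContDiff ℝ (⊤ : ℕ∞) h) :
    ∀ m, ∀ z : ℝ, iteratedDeriv (m + 2) (fun z => (1 + z ^ 2) * h z) z
      = (1 + z ^ 2) * iteratedDeriv (m + 2) h z
        + 2 * ((m : ℝ) + 2) * z * iteratedDeriv (m + 1) h z
        + ((m : ℝ) + 2) * ((m : ℝ) + 1) * iteratedDeriv m h z := by
  have hq : ∀ x : ℝ, HasDerivAt (fun z : ℝ => 1 + z ^ 2) (2 * x) x := by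
    intro x
    simpa using ((hasDerivAt_pow 2 x).const_add 1)
  have h1 : deriv (fun z => (1 + z ^ 2) * h z)
      = fun z => 2 * z * iteratedDeriv 0 h z + (1 + z ^ 2) * iteratedDeriv 1 h z := by
    funext x
    have hx := (hq x).mul (hd hs 0 x)
    simp only [iteratedDeriv_zero, Pi.mul_def] at hx ⊢
    rw [hx.deriv]
  intro m
  induction m with
  | zero =>
    intro z
    rw [iteratedDeriv_succ, iteratedDeriv_succ, iteratedDeriv_zero, h1]
    have t1 := ((hasDerivAt_id z).const_mul (2 : ℝ)).mul (hd hs 0 z)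
    have t2 := (hq z).mul (hd hs 1 z)
    have hx := (t1.add t2).deriv
    simp only [id_eq, Pi.mul_def, Pi.add_def] at hx
    rw [hx]
    norm_num
    ring
  | succ m ih =>
    intro z
    have hfun : iteratedDeriv (m + 2) (fun z => (1 + z ^ 2) * h z)
        = fun z => (1 + z ^ 2) * iteratedDeriv (m + 2) h z
            + 2 * ((m : ℝ) + 2) * z * iteratedDeriv (m + 1) h z
            + ((m : ℝ) + 2) * ((m : ℝ) + 1) * iteratedDeriv m h z := funext ih
    rw [show m + 1 + 2 = (m + 2) + 1 by ring, iteratedDeriv_succ, hfun]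
    have t1 := (hq z).mul (hd hs (m + 2) z)
    have t2 := ((hasDerivAt_id z).const_mul (2 * ((m : ℝ) + 2))).mul (hd hs (m + 1) z)
    have t3 := (hd hs m z).const_mul (((m : ℝ) + 2) * ((m : ℝ) + 1))
    have hx := ((t1.add t2).add t3).deriv
    simp only [id_eq, Pi.mul_def, Pi.add_def] at hx
    rw [hx]
    simp only [show m + 2 + 1 = m + 3 from rfl, show m + 1 + 1 = m + 2 from rfl,
      show m + 1 + 2 = m + 3 from rfl]
    push_cast
    ring

lemma A_eq (k : ℕ) : (fun z : ℝ => Real.arctan z ^ k) = fun z => (1 + z ^ 2) * F k z := by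
  funext z
  unfold F
  field_simp

lemma recD (n k : ℕ) :
    iteratedDeriv (n + 2) (F k) 0
      = (k : ℝ) * iteratedDeriv (n + 1) (F (k - 1)) 0
        - ((n : ℝ) + 2) * ((n : ℝ) + 1) * iteratedDeriv n (F k) 0 := by
  have h1 : iteratedDeriv (n + 2) (fun z : ℝ => Real.arctan z ^ k) 0
      = (k : ℝ) * iteratedDeriv (n + 1) (F (k - 1)) 0 := by
    rw [iteratedDeriv_succ']
    have hderiv : deriv (fun z : ℝ => Real.arctan z ^ k) = fun z => (k : ℝ) * F (k - 1) z :=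
      funext fun x => (hasDerivAt_arctanPow k x).deriv
    rw [hderiv, iter_cmul (contDiff_F (k - 1)) _ (n + 1)]
  have h2 := key (contDiff_F k) n 0
  rw [A_eq k] at h1
  rw [h1] at h2
  norm_num at h2
  linarith

lemma D0 (k : ℕ) : F k 0 = if k = 0 then 1 else 0 := by
  unfold F
  rcases k with _ | k <;> simp [Real.arctan_zero]

lemma D1 (k : ℕ) : deriv (F k) 0 = if k = 1 then 1 else 0 := by
  have h2 : HasDerivAt (fun z : ℝ => 1 + z ^ 2) (2 * 0) (0 : ℝ) := by
    simpa using ((hasDerivAt_pow 2 (0 : ℝ)).const_add 1)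
  have hdiv := (hasDerivAt_const (0 : ℝ) (1 : ℝ)).div h2 (one_add_sq_ne 0)
  have hder := (hdiv.mul (hasDerivAt_arctanPow k 0)).deriv
  simp only [Pi.mul_def, Pi.div_def] at hder
  rw [show F k = fun z : ℝ => (1 / (1 + z ^ 2)) * Real.arctan z ^ k from rfl, hder]
  rcases k with _ | k
  · simp
  · rcases k with _ | k
    · norm_num [Real.arctan_zero, D0]
    · norm_num [Real.arctan_zero, D0, F]

lemma main (n : ℕ) : ∀ k : ℕ, iteratedDeriv n (F k) 0
    = (k.factorial : ℝ) * (((sigmoidPoly n).coeff k : ℚ) : ℝ) := by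
  induction n using Nat.strong_induction_on with
  | _ n ih =>
    match n with
    | 0 =>
      intro k
      rw [iteratedDeriv_zero, D0]
      simp [sigmoidPoly, Polynomial.coeff_one]
      split <;> simp_all [Nat.factorial]
    | 1 =>
      intro k
      rw [iteratedDeriv_one, D1]
      simp [sigmoidPoly, Polynomial.coeff_X]
      rcases eq_or_ne k 1 with h | h
      · subst h; simp [Nat.factorial]
      · simp [h, Ne.symm h]
    | (m + 2) =>
      intro k
      rw [recD m k, ih (m + 1) (by omega) (k - 1), ih m (by omega) k]
      have hc : ((sigmoidPoly (m + 2)).coeff k : ℚ)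
          = (Polynomial.X * sigmoidPoly (m + 1)).coeff k
            - (((m + 2) * (m + 1) : ℕ) : ℚ) * (sigmoidPoly m).coeff k := by
        show (sigmoidPoly (m + 2)).coeff k = _
        rw [show sigmoidPoly (m + 2) = Polynomial.X * sigmoidPoly (m + 1)
          - Polynomial.C (((m + 2) * (m + 1) : ℕ) : ℚ) * sigmoidPoly m from rfl]
        rw [Polynomial.coeff_sub, Polynomial.coeff_C_mul]
      rcases k with _ | k
      · rw [hc]
        simp only [Polynomial.mul_coeff_zero, Polynomial.coeff_X_zero, zero_mul]
        push_cast
        ring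
      · rw [hc, Polynomial.coeff_X_mul]
        simp only [Nat.add_sub_cancel]
        push_cast [Nat.factorial_succ]
        ring

end SigmoidAux

theorem arctan_sigmoid_array_is_coefficient_array (n k : ℕ) :
    (((sigmoidPoly n).coeff k : ℚ) : ℝ)
      = (1 / (k.factorial : ℝ)) *
          iteratedDeriv n (fun z : ℝ => (1 / (1 + z ^ 2)) * (Real.arctan z) ^ k) 0 := by
  have h := SigmoidAux.main n k
  rw [show (fun z : ℝ => (1 / (1 + z ^ 2)) * (Real.arctan z) ^ k) = SigmoidAux.F k from rfl, h]
  have hk : (k.factorial : ℝ) ≠ 0 := by exact_mod_cast k.factorial_ne_zero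
  field_simp
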